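/- Fix ρ0 > 0 and real parameters a₁, a₂, a₃, b, c. Let A be the 9×9 real matrix whose only nonzero entries are A[1,7] = −1/ρ0, A[4,8] = −1/(2ρ0), A[6,9] = −1/(2ρ0), A[7,1] = −a₁, A[7,2] = −a₂, A[7,3] = −a₃, A[8,4] = −b, A[9,6] = −c. Then the characteristic polynomial of A equals X³ · (X² − a₁/ρ0) · (X² − b/(2ρ0)) · (X² − c/(2ρ0)). In particular the eigenvalues of A are ±√(a₁/ρ0), ±√(b/(2ρ0)), ±√(c/(2ρ0)), and 0 with algebraic multiplicity three, and the characteristic polynomial does not depend on a₂ or a₃. -/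
import Mathlib


open Real Matrix Polynomial

/-- The 9×9 matrix whose only nonzero entries (1-indexed) are `A[1,7] = −1/ρ0`,
`A[4,8] = −1/(2ρ0)`, `A[6,9] = −1/(2ρ0)`, `A[7,1] = −a₁`, `A[7,2] = −a₂`,
`A[7,3] = −a₃`, `A[8,4] = −b`, `A[9,6] = −c` (0-indexed here). -/
noncomputable def fluxJac (ρ0 a₁ a₂ a₃ b c : ℝ) : Matrix (Fin 9) (Fin 9) ℝ :=
  Matrix.of fun i j =>
    if i = 0 ∧ j = 6 then -(1 / ρ0)
    else if i = 3 ∧ j = 7 then -(1 / (2 * ρ0))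
    else if i = 5 ∧ j = 8 then -(1 / (2 * ρ0))
    else if i = 6 ∧ j = 0 then -a₁
    else if i = 6 ∧ j = 1 then -a₂
    else if i = 6 ∧ j = 2 then -a₃
    else if i = 7 ∧ j = 3 then -b
    else if i = 8 ∧ j = 5 then -c
    else 0

/-- Block labels making `fluxJac` block triangular. -/
def blk : Fin 9 → ℕ := ![0, 1, 2, 3, 4, 5, 0, 3, 5]

/-- Explicit equivalence of `Fin 2` with a two-element block. -/
def eqv2 (p q : Fin 9) (k : ℕ) (hp : blk p = k) (hq : blk q = k)
    (hmem : ∀ i, blk i = k → i = p ∨ i = q) (hne : p ≠ q) :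
    Fin 2 ≃ {i : Fin 9 // blk i = k} where
  toFun := ![⟨p, hp⟩, ⟨q, hq⟩]
  invFun s := if s.1 = p then 0 else 1
  left_inv x := by
    fin_cases x <;> simp [hne, Ne.symm hne]
  right_inv s := by
    rcases hmem s.1 s.2 with h | h <;> subst h <;>
      simp [Subtype.ext_iff, hne, Ne.symm hne]

/-- Explicit equivalence of `Fin 1` with a one-element block. -/
def eqv1 (p : Fin 9) (k : ℕ) (hp : blk p = k)
    (hmem : ∀ i, blk i = k → i = p) : Fin 1 ≃ {i : Fin 9 // blk i = k} where
  toFun := fun _ => ⟨p, hp⟩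
  invFun _ := 0
  left_inv x := by fin_cases x; rfl
  right_inv s := by simp [Subtype.ext_iff, hmem s.1 s.2]

lemma charpoly_card_one {n : Type*} [DecidableEq n] [Fintype n] (e : Fin 1 ≃ n)
    (M : Matrix n n ℝ) : M.charpoly = X - C (M (e 0) (e 0)) := by
  rw [← Matrix.charpoly_reindex e.symm, Matrix.charpoly, Matrix.det_fin_one]
  simp [charmatrix_apply, Matrix.reindex_apply]

lemma charpoly_card_two {n : Type*} [DecidableEq n] [Fintype n] (e : Fin 2 ≃ n)
    (M : Matrix n n ℝ) :
    M.charpoly = (X - C (M (e 0) (e 0))) * (X - C (M (e 1) (e 1)))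
      - C (M (e 0) (e 1)) * C (M (e 1) (e 0)) := by
  rw [← Matrix.charpoly_reindex e.symm, Matrix.charpoly, Matrix.det_fin_two]
  simp [charmatrix_apply, Matrix.reindex_apply, Matrix.submatrix_apply]
  try ring

set_option maxRecDepth 4000 in
/-- The characteristic polynomial of the flux Jacobian is
`X³(X² − a₁/ρ0)(X² − b/(2ρ0))(X² − c/(2ρ0))`; in particular it is independent
of `a₂` and `a₃`. -/
theorem fluxJac_charpoly (ρ0 a₁ a₂ a₃ b c : ℝ) (hρ0 : 0 < ρ0) :
    (fluxJac ρ0 a₁ a₂ a₃ b c).charpoly =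
      X ^ 3 * (X ^ 2 - C (a₁ / ρ0)) * (X ^ 2 - C (b / (2 * ρ0))) *
        (X ^ 2 - C (c / (2 * ρ0))) := by
  set M := fluxJac ρ0 a₁ a₂ a₃ b c with hM
  have hbt : M.BlockTriangular blk := by
    intro i j hij
    fin_cases i <;> fin_cases j <;>
      first
        | rfl
        | (exact absurd hij (by decide))
  have h0 : (M.toSquareBlock blk 0).charpoly = X ^ 2 - C (a₁ / ρ0) := by
    rw [charpoly_card_two (eqv2 0 6 0 rfl rfl (by decide) (by decide))]
    simp (config := { decide := true }) only [hM, eqv2, Matrix.toSquareBlock_def, fluxJac,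
      Matrix.of_apply, Matrix.cons_val_zero, Matrix.cons_val_one, Matrix.head_cons,
      if_true, if_false, and_self, map_neg, map_zero, sub_zero, neg_neg, mul_neg, neg_mul]
    rw [← C_mul, show 1 / ρ0 * a₁ = a₁ / ρ0 by ring]
    ring
  have h3 : (M.toSquareBlock blk 3).charpoly = X ^ 2 - C (b / (2 * ρ0)) := by
    rw [charpoly_card_two (eqv2 3 7 3 rfl rfl (by decide) (by decide))]
    simp (config := { decide := true }) only [hM, eqv2, Matrix.toSquareBlock_def, fluxJac,
      Matrix.of_apply, Matrix.cons_val_zero, Matrix.cons_val_one, Matrix.head_cons,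
      if_true, if_false, and_self, map_neg, map_zero, sub_zero, neg_neg, mul_neg, neg_mul]
    rw [← C_mul, show 1 / (2 * ρ0) * b = b / (2 * ρ0) by ring]
    ring
  have h5 : (M.toSquareBlock blk 5).charpoly = X ^ 2 - C (c / (2 * ρ0)) := by
    rw [charpoly_card_two (eqv2 5 8 5 rfl rfl (by decide) (by decide))]
    simp (config := { decide := true }) only [hM, eqv2, Matrix.toSquareBlock_def, fluxJac,
      Matrix.of_apply, Matrix.cons_val_zero, Matrix.cons_val_one, Matrix.head_cons,
      if_true, if_false, and_self, map_neg, map_zero, sub_zero, neg_neg, mul_neg, neg_mul]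
    rw [← C_mul, show 1 / (2 * ρ0) * c = c / (2 * ρ0) by ring]
    ring
  have h1 : (M.toSquareBlock blk 1).charpoly = X := by
    rw [charpoly_card_one (eqv1 1 1 rfl (by decide))]
    simp (config := { decide := true }) only [hM, eqv1, Matrix.toSquareBlock_def, fluxJac,
      Matrix.of_apply, if_true, if_false, and_self, map_zero, sub_zero]
  have h2 : (M.toSquareBlock blk 2).charpoly = X := by
    rw [charpoly_card_one (eqv1 2 2 rfl (by decide))]
    simp (config := { decide := true }) only [hM, eqv1, Matrix.toSquareBlock_def, fluxJac,
      Matrix.of_apply, if_true, if_false, and_self, map_zero, sub_zero]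
  have h4 : (M.toSquareBlock blk 4).charpoly = X := by
    rw [charpoly_card_one (eqv1 4 4 rfl (by decide))]
    simp (config := { decide := true }) only [hM, eqv1, Matrix.toSquareBlock_def, fluxJac,
      Matrix.of_apply, if_true, if_false, and_self, map_zero, sub_zero]
  rw [hbt.charpoly, show Finset.image blk Finset.univ = {0, 1, 2, 3, 4, 5} by decide]
  rw [Finset.prod_insert (by decide), Finset.prod_insert (by decide),
    Finset.prod_insert (by decide), Finset.prod_insert (by decide),
    Finset.prod_insert (by decide), Finset.prod_singleton]
  rw [h0, h1, h2, h3, h4, h5]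
  ring
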